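/- arXiv:math/0601222 — 3 statements merged into one kernel-verified Lean document; each statement's English description precedes it below -/
import Mathlib

section
/- Let G be a discrete group generated by a finite symmetric set V, with word-metric balls B_n satisfying the doubling condition |B_{2n}| ≤ A·|B_n|. Then there exist constants C > 0 and δ > 0 such that for all n ≥ 1, the shell satisfies |B_{n} \ B_{n-1}| ≤ C·n^{-δ}·|B_n|. -/
open scoped Pointwise
open Finset

/-!
Cover the outer shell `B_n \ B_{n-h}` by translates `p B_{2h}` with `p` in the shell
`B_{n-2h} \ B_{n-3h}`; the translates `p B_h` of that shell all land in `B_{n-h} \ B_{n-4h}`,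
so Ruzsa's covering lemma together with doubling gives `|B_n \ B_{n-h}| ≤ A² |B_{n-h} \ B_{n-4h}|`.
Hence the shells `B_n \ B_{n-h}` shrink by the factor `A² / (1 + A²)` each time `h` is divided
by `4`, and `log₄ n` such steps give the polynomial decay.
-/

namespace Finset

variable {G : Type*} [Group G] [DecidableEq G]

theorem pow_add_sdiff_pow_add_subset_mul (V : Finset G) (a b k : ℕ) :
    V ^ (b + k) \ V ^ (a + k) ⊆ (V ^ b \ V ^ a) * V ^ k := by
  intro x hx
  obtain ⟨hx, hxa⟩ := mem_sdiff.1 hx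
  rw [pow_add] at hx hxa
  obtain ⟨p, hp, q, hq, rfl⟩ := mem_mul.1 hx
  exact mul_mem_mul (mem_sdiff.2 ⟨hp, fun hpa => hxa (mul_mem_mul hpa hq)⟩) hq

theorem sdiff_pow_add_mul_subset {V : Finset G} (hsymm : V⁻¹ = V) (a b k : ℕ) :
    (V ^ b \ V ^ (a + k)) * V ^ k ⊆ V ^ (b + k) \ V ^ a := by
  intro z hz
  obtain ⟨p, hp, q, hq, rfl⟩ := mem_mul.1 hz
  obtain ⟨hpb, hpa⟩ := mem_sdiff.1 hp
  refine mem_sdiff.2 ⟨pow_add V b k ▸ mul_mem_mul hpb hq, fun hpq => hpa ?_⟩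
  have hq' : q⁻¹ ∈ V ^ k := by rw [← hsymm, inv_pow]; exact inv_mem_inv hq
  simpa [pow_add] using mul_mem_mul hpq hq'

/-- By Ruzsa's covering lemma, `S` is covered by at most `|T| / |B|` translates of `B / B`. -/
theorem card_mul_mul_card_le {S B T : Finset G} (hST : S * B ⊆ T) (C : Finset G) :
    #(S * C) * #B ≤ #T * #(B / B * C) := by
  obtain rfl | hB := B.eq_empty_or_nonempty
  · simp
  have hBpos : (0 : ℝ) < #B := by exact_mod_cast hB.card_pos
  obtain ⟨F, -, hF, hSF⟩ := ruzsa_covering_mul (K := #T / #B) hB (by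
    rw [div_mul_cancel₀ _ hBpos.ne']
    exact_mod_cast card_le_card hST)
  have hFB : (#F * #B : ℝ) ≤ #T := (le_div_iff₀ hBpos).1 hF
  have hSC : #(S * C) ≤ #F * #(B / B * C) := by
    calc #(S * C) ≤ #(F * (B / B) * C) := card_le_card (mul_subset_mul_right hSF)
      _ ≤ #F * #(B / B * C) := by rw [mul_assoc]; exact card_mul_le
  have hSC' : (#(S * C) : ℝ) ≤ #F * #(B / B * C) := by exact_mod_cast hSC
  have : (#(S * C) * #B : ℝ) ≤ #T * #(B / B * C) := by
    calc (#(S * C) * #B : ℝ) ≤ #F * #(B / B * C) * #B := by gcongr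
      _ = #F * #B * #(B / B * C) := by ring
      _ ≤ #T * #(B / B * C) := by gcongr
  exact_mod_cast this

end Finset

section Doubling

variable {G : Type*} [Group G] [DecidableEq G] {V : Finset G} {A : ℝ}

theorem card_pow_two_pow_mul_le (hA : 0 ≤ A)
    (hdbl : ∀ n : ℕ, 1 ≤ n → ((V ^ (2 * n)).card : ℝ) ≤ A * (V ^ n).card)
    (k : ℕ) {h : ℕ} (hh : 1 ≤ h) : ((V ^ (2 ^ k * h)).card : ℝ) ≤ A ^ k * (V ^ h).card := by
  induction k with
  | zero => simp
  | succ k ih =>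
    calc ((V ^ (2 ^ (k + 1) * h)).card : ℝ) = (V ^ (2 * (2 ^ k * h))).card := by ring_nf
      _ ≤ A * (V ^ (2 ^ k * h)).card := hdbl _ (le_mul_of_one_le_of_le Nat.one_le_two_pow hh)
      _ ≤ A * (A ^ k * (V ^ h).card) := by gcongr
      _ = A ^ (k + 1) * (V ^ h).card := by ring

theorem card_shell_le (hone : (1 : G) ∈ V) (hsymm : V⁻¹ = V) (hA : 0 ≤ A)
    (hdbl : ∀ n : ℕ, 1 ≤ n → ((V ^ (2 * n)).card : ℝ) ≤ A * (V ^ n).card)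
    {n h : ℕ} (hh : 1 ≤ h) (hn : 4 * h ≤ n) :
    (1 + A ^ 2) * ((V ^ n \ V ^ (n - h)).card : ℝ) ≤ A ^ 2 * (V ^ n \ V ^ (n - 4 * h)).card := by
  set outer := V ^ n \ V ^ (n - h)
  set inner := V ^ (n - h) \ V ^ (n - 4 * h)
  set middle := V ^ (n - 2 * h) \ V ^ (n - 3 * h)
  have houter : outer ⊆ middle * V ^ (2 * h) := by
    have := pow_add_sdiff_pow_add_subset_mul V (n - 3 * h) (n - 2 * h) (2 * h)
    rwa [show n - 2 * h + 2 * h = n by omega, show n - 3 * h + 2 * h = n - h by omega] at this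
  have hinner : middle * V ^ h ⊆ inner := by
    have := sdiff_pow_add_mul_subset hsymm (n - 4 * h) (n - 2 * h) h
    rwa [show n - 4 * h + h = n - 3 * h by omega, show n - 2 * h + h = n - h by omega] at this
  have hdiv : V ^ h / V ^ h * V ^ (2 * h) = V ^ (2 ^ 2 * h) := by
    rw [div_eq_mul_inv, ← inv_pow, hsymm, ← pow_add, ← pow_add]
    ring_nf
  have hcover := card_mul_mul_card_le hinner (V ^ (2 * h))
  rw [hdiv] at hcover
  have hcover' : ((middle * V ^ (2 * h)).card * (V ^ h).card : ℝ)
      ≤ inner.card * (V ^ (2 ^ 2 * h)).card := by exact_mod_cast hcover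
  have hball : (0 : ℝ) < (V ^ h).card := by exact_mod_cast card_pos.2 ⟨1, one_mem_pow hone⟩
  have hcard : (outer.card : ℝ) ≤ A ^ 2 * inner.card := by
    refine le_of_mul_le_mul_right ?_ hball
    calc (outer.card * (V ^ h).card : ℝ) ≤ (middle * V ^ (2 * h)).card * (V ^ h).card := by
          gcongr
      _ ≤ inner.card * (V ^ (2 ^ 2 * h)).card := hcover'
      _ ≤ inner.card * (A ^ 2 * (V ^ h).card) := by
          gcongr; exact card_pow_two_pow_mul_le hA hdbl 2 hh
      _ = A ^ 2 * inner.card * (V ^ h).card := by ring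
  have hsplit : outer.card + inner.card = (V ^ n \ V ^ (n - 4 * h)).card := by
    rw [← card_union_of_disjoint (disjoint_sdiff_self_left.mono_right sdiff_subset),
      sdiff_union_sdiff_cancel (pow_subset_pow_right hone (by omega))
        (pow_subset_pow_right hone (by omega))]
  have hsplit' : (outer.card + inner.card : ℝ) = (V ^ n \ V ^ (n - 4 * h)).card := by
    exact_mod_cast hsplit
  linear_combination hcard + A ^ 2 * hsplit'

end Doubling

theorem le_pow_mul_of_forall_lt_le_mul_succ {g : ℕ → ℝ} {θ : ℝ} (hθ : 0 ≤ θ) {T : ℕ}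
    (hg : ∀ t < T, g t ≤ θ * g (t + 1)) : g 0 ≤ θ ^ T * g T := by
  induction T with
  | zero => simp
  | succ T ih =>
    calc g 0 ≤ θ ^ T * g T := ih fun t ht => hg t (by omega)
      _ ≤ θ ^ T * (θ * g (T + 1)) := by gcongr; exact hg T (by omega)
      _ = θ ^ (T + 1) * g (T + 1) := by ring

theorem pow_log_le_inv_mul_rpow_logb {θ : ℝ} (hθ0 : 0 < θ) (hθ1 : θ < 1) {b : ℕ} (hb : 1 < b)
    {n : ℕ} (hn : n ≠ 0) : θ ^ Nat.log b n ≤ θ⁻¹ * (n : ℝ) ^ Real.logb b θ := by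
  set t := Nat.log b n
  have hb' : (1 : ℝ) < b := by exact_mod_cast hb
  have hnb : (n : ℝ) ≤ (b : ℝ) ^ (t + 1) := by exact_mod_cast (Nat.lt_pow_succ_log_self hb n).le
  have hpow : θ ^ (t + 1) ≤ (n : ℝ) ^ Real.logb b θ :=
    calc θ ^ (t + 1) = ((b : ℝ) ^ (t + 1)) ^ Real.logb b θ := by
          rw [← Real.rpow_pow_comm (by positivity), Real.rpow_logb (by positivity) hb'.ne' hθ0]
      _ ≤ (n : ℝ) ^ Real.logb b θ :=
          Real.rpow_le_rpow_of_nonpos (by positivity) hnb (Real.logb_neg hb' hθ0 hθ1).le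
  calc θ ^ t = θ⁻¹ * θ ^ (t + 1) := by field_simp; ring
    _ ≤ θ⁻¹ * (n : ℝ) ^ Real.logb b θ := by gcongr

theorem doubling_shell_decay_general {G : Type*} [Group G] [DecidableEq G]
    (V : Finset G) (hone : (1 : G) ∈ V) (hsymm : V⁻¹ = V)
    (A : ℝ) (hdbl : ∀ n : ℕ, 1 ≤ n → ((V ^ (2 * n)).card : ℝ) ≤ A * (V ^ n).card) :
    ∃ C > (0 : ℝ), ∃ δ > (0 : ℝ), ∀ n : ℕ, 1 ≤ n →
      (((V ^ n) \ (V ^ (n - 1))).card : ℝ) ≤ C * (n : ℝ) ^ (-δ) * (V ^ n).card := by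
  have hA : 0 < A := by
    have hball : (0 : ℝ) < (V ^ (2 * 1)).card := by exact_mod_cast card_pos.2 ⟨1, one_mem_pow hone⟩
    exact pos_of_mul_pos_left (hball.trans_le (hdbl 1 le_rfl)) (Nat.cast_nonneg _)
  set θ := A ^ 2 / (1 + A ^ 2)
  have hθ0 : 0 < θ := by positivity
  have hθ1 : θ < 1 := (div_lt_one (by positivity)).2 (by linarith)
  refine ⟨θ⁻¹, inv_pos.2 hθ0, -Real.logb 4 θ, neg_pos.2 (Real.logb_neg (by norm_num) hθ0 hθ1),
    fun n hn => ?_⟩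
  set T := Nat.log 4 n
  have hstep : ∀ t < T, ((V ^ n \ V ^ (n - 4 ^ t)).card : ℝ)
      ≤ θ * (V ^ n \ V ^ (n - 4 ^ (t + 1))).card := by
    intro t ht
    have h4 : 4 * 4 ^ t ≤ n := by
      rw [← pow_succ']
      exact (Nat.pow_le_pow_right (by norm_num) ht).trans (Nat.pow_log_le_self 4 (by omega))
    have := card_shell_le hone hsymm hA.le hdbl (Nat.one_le_pow t 4 (by norm_num)) h4
    rw [← pow_succ'] at this
    rw [div_mul_eq_mul_div, le_div_iff₀ (by positivity)]
    linarith
  calc ((V ^ n \ V ^ (n - 1)).card : ℝ) ≤ θ ^ T * (V ^ n \ V ^ (n - 4 ^ T)).card := by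
        simpa using le_pow_mul_of_forall_lt_le_mul_succ hθ0.le hstep
    _ ≤ θ ^ T * (V ^ n).card := by gcongr; exact sdiff_subset
    _ ≤ θ⁻¹ * (n : ℝ) ^ (-(-Real.logb 4 θ)) * (V ^ n).card := by
        rw [neg_neg]
        gcongr
        exact_mod_cast pow_log_le_inv_mul_rpow_logb hθ0 hθ1 (b := 4) (by norm_num) (by omega)

/-- Tessera: for a finitely generated group whose word-metric balls satisfy the
doubling condition, the shells satisfy `|B_n \ B_{n-1}| ≤ C·n^{-δ}·|B_n|`. -/
theorem doubling_shell_decay {G : Type*} [Group G] [DecidableEq G]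
    (V : Finset G) (hone : (1 : G) ∈ V) (hsymm : V⁻¹ = V)
    (hgen : ∀ g : G, ∃ n : ℕ, g ∈ V ^ n)
    (A : ℝ) (hdbl : ∀ n : ℕ, 1 ≤ n → ((V ^ (2 * n)).card : ℝ) ≤ A * (V ^ n).card) :
    ∃ C > (0 : ℝ), ∃ δ > (0 : ℝ), ∀ n : ℕ, 1 ≤ n →
      (((V ^ n) \ (V ^ (n - 1))).card : ℝ) ≤ C * (n : ℝ) ^ (-δ) * (V ^ n).card :=
  doubling_shell_decay_general V hone hsymm A hdbl
end

section
/- Let G be a discrete group with finite symmetric generating set V and word-metric balls B_n satisfying the doubling condition. Then there exists a constant c > 0 such that for all integers k, m with 1 ≤ k ≤ m, the shells satisfy |B_m \ B_{m-k}| ≥ c·|B_{m+k} \ B_m|. -/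
open scoped Pointwise

section DoublingShellAux
open Finset
variable {G : Type*} [Group G] [DecidableEq G] {V : Finset G}

lemma exists_prefix (hone : (1 : G) ∈ V) {a b j : ℕ} (hj1 : 1 ≤ j) (hja : j ≤ a + 1)
    {z : G} (hzb : z ∈ V ^ b) (hza : z ∉ V ^ a) :
    ∃ y, (y ∈ V ^ j ∧ y ∉ V ^ (j - 1)) ∧ ∃ g ∈ V ^ (b - j), z = y * g := by
  have hex : ∃ i, z ∈ V ^ i := ⟨b, hzb⟩
  classical
  set n := Nat.find hex with hn
  have hzn : z ∈ V ^ n := Nat.find_spec hex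
  have hnb : n ≤ b := Nat.find_le hzb
  have han : a < n := by
    by_contra h
    exact hza (pow_subset_pow_right hone (not_lt.1 h) hzn)
  have hjn : j ≤ n := by omega
  have hdecomp : V ^ n = V ^ j * V ^ (n - j) := by
    rw [← pow_add]; congr 1; omega
  rw [hdecomp, mem_mul] at hzn
  obtain ⟨y, hy, g, hg, hyg⟩ := hzn
  refine ⟨y, ⟨hy, ?_⟩, g, pow_subset_pow_right hone (by omega) hg, hyg.symm⟩
  intro hy'
  have hz1 : z ∈ V ^ (n - 1) := by
    have hd : V ^ (n - 1) = V ^ (j - 1) * V ^ (n - j) := by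
      rw [← pow_add]; congr 1; omega
    rw [hd, ← hyg]
    exact mul_mem_mul hy' hg
  have : n ≤ n - 1 := Nat.find_le hz1
  omega

lemma exists_net (S B : Finset G) (hB : B.Nonempty) :
    ∃ D ⊆ S, (∀ x ∈ D, ∀ y ∈ D, x ≠ y → Disjoint (x • B) (y • B)) ∧
      ∀ s ∈ S, ∃ x ∈ D, ¬ Disjoint (s • B) (x • B) := by
  classical
  set F := S.powerset.filter
    (fun D => ∀ x ∈ D, ∀ y ∈ D, x ≠ y → Disjoint (x • B) (y • B)) with hF
  have hne : F.Nonempty := ⟨∅, by simp [hF]⟩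
  obtain ⟨D, hDF, hmax⟩ := F.exists_max_image Finset.card hne
  rw [hF, mem_filter, mem_powerset] at hDF
  obtain ⟨hDS, hdisj⟩ := hDF
  refine ⟨D, hDS, hdisj, fun s hs => ?_⟩
  by_contra h
  push_neg at h
  have hsD : s ∉ D := by
    intro hsD
    have := h s hsD
    rw [disjoint_self] at this
    have h2 : (s • B) = ∅ := by simpa using this
    exact hB.smul_finset.ne_empty h2
  have hins : insert s D ∈ F := by
    rw [hF, mem_filter, mem_powerset]
    refine ⟨insert_subset hs hDS, fun x hx y hy hxy => ?_⟩
    rcases mem_insert.1 hx with hx' | hx'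
    · rcases mem_insert.1 hy with hy' | hy'
      · exact absurd (hx'.trans hy'.symm) hxy
      · subst hx'; exact h y hy'
    · rcases mem_insert.1 hy with hy' | hy'
      · subst hy'; exact (h x hx').symm
      · exact hdisj x hx' y hy' hxy
  have := hmax _ hins
  rw [card_insert_of_notMem hsD] at this
  omega

lemma inv_mem_pow (hsymm : V⁻¹ = V) {r : ℕ} {g : G} (hg : g ∈ V ^ r) : g⁻¹ ∈ V ^ r := by
  have : g⁻¹ ∈ (V ^ r)⁻¹ := Finset.inv_mem_inv hg
  rwa [← inv_pow, hsymm] at this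

lemma main_count (hone : (1 : G) ∈ V) (hsymm : V⁻¹ = V) {r k m : ℕ}
    (hrk : 2 * r + 1 ≤ k) (hkm : k ≤ m) :
    ((V ^ (m + k)) \ (V ^ m)).card * (V ^ r).card ≤
      (V ^ (2 * k + r - 1)).card * ((V ^ m) \ (V ^ (m - k))).card := by
  classical
  set j := m - k + r + 1 with hj
  set S := (V ^ j) \ (V ^ (j - 1)) with hS
  set B := V ^ r with hB
  have hBne : B.Nonempty := ⟨1, one_mem_pow hone⟩
  obtain ⟨D, hDS, hdisj, hcov⟩ := exists_net S B hBne
  -- inner shell bound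
  have hsub : D.biUnion (fun x => x • B) ⊆ (V ^ m) \ (V ^ (m - k)) := by
    intro w hw
    rw [mem_biUnion] at hw
    obtain ⟨x, hxD, hw⟩ := hw
    rw [mem_smul_finset] at hw
    obtain ⟨b, hb, rfl⟩ := hw
    have hxS := hDS hxD
    rw [hS, mem_sdiff] at hxS
    rw [mem_sdiff, smul_eq_mul]
    constructor
    · have : x * b ∈ V ^ j * V ^ r := mul_mem_mul hxS.1 hb
      rw [← pow_add] at this
      exact pow_subset_pow_right hone (by omega) this
    · intro hmem
      apply hxS.2
      have : (x * b) * b⁻¹ ∈ V ^ (m - k) * V ^ r :=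
        mul_mem_mul hmem (inv_mem_pow hsymm hb)
      rw [mul_inv_cancel_right, ← pow_add] at this
      have he : m - k + r = j - 1 := by omega
      rwa [he] at this
  have hinner : D.card * B.card ≤ ((V ^ m) \ (V ^ (m - k))).card := by
    calc D.card * B.card = ∑ x ∈ D, (x • B).card := by
          simp [card_smul_finset, mul_comm]
      _ = (D.biUnion (fun x => x • B)).card := (card_biUnion hdisj).symm
      _ ≤ _ := card_le_card hsub
  -- covering bound
  have hcover : (V ^ (m + k)) \ (V ^ m) ⊆
      D.biUnion (fun x => x • V ^ (2 * k + r - 1)) := by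
    intro z hz
    rw [mem_sdiff] at hz
    obtain ⟨y, hyS, g, hg, rfl⟩ :=
      exists_prefix hone (a := m) (b := m + k) (j := j) (by omega) (by omega) hz.1 hz.2
    have hySmem : y ∈ S := by rw [hS, mem_sdiff]; exact ⟨hyS.1, hyS.2⟩
    obtain ⟨x, hxD, hnd⟩ := hcov y hySmem
    obtain ⟨c, hc1, hc2⟩ := Finset.not_disjoint_iff.1 hnd
    rw [mem_smul_finset] at hc1 hc2
    obtain ⟨b1, hb1, hcb1⟩ := hc1
    obtain ⟨b2, hb2, hcb2⟩ := hc2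
    rw [smul_eq_mul] at hcb1 hcb2
    rw [mem_biUnion]
    refine ⟨x, hxD, ?_⟩
    rw [mem_smul_finset]
    rw [hB] at hb1 hb2
    refine ⟨b2 * b1⁻¹ * g, ?_, ?_⟩
    · have h1 : b2 * b1⁻¹ ∈ V ^ r * V ^ r := mul_mem_mul hb2 (inv_mem_pow hsymm hb1)
      rw [← pow_add] at h1
      have h2 : b2 * b1⁻¹ * g ∈ V ^ (r + r) * V ^ (m + k - j) := mul_mem_mul h1 hg
      rw [← pow_add] at h2
      have he : r + r + (m + k - j) = 2 * k + r - 1 := by omega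
      rwa [he] at h2
    · rw [smul_eq_mul]
      have hxy : x * b2 = y * b1 := hcb2.trans hcb1.symm
      calc x * (b2 * b1⁻¹ * g) = (x * b2) * (b1⁻¹ * g) := by group
        _ = (y * b1) * (b1⁻¹ * g) := by rw [hxy]
        _ = y * g := by group
  have houter : ((V ^ (m + k)) \ (V ^ m)).card ≤ D.card * (V ^ (2 * k + r - 1)).card := by
    calc ((V ^ (m + k)) \ (V ^ m)).card ≤ (D.biUnion (fun x => x • V ^ (2 * k + r - 1))).card :=
          card_le_card hcover
      _ ≤ ∑ x ∈ D, (x • V ^ (2 * k + r - 1)).card := card_biUnion_le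
      _ = D.card * (V ^ (2 * k + r - 1)).card := by simp [card_smul_finset, mul_comm]
  calc ((V ^ (m + k)) \ (V ^ m)).card * B.card
      ≤ (D.card * (V ^ (2 * k + r - 1)).card) * B.card := Nat.mul_le_mul_right _ houter
    _ = (V ^ (2 * k + r - 1)).card * (D.card * B.card) := by ring
    _ ≤ _ := Nat.mul_le_mul_left _ hinner

end DoublingShellAux

open Finset in
/-- For a finitely generated group whose word-metric balls satisfy the doubling
condition, inner shells dominate outer shells: `|B_m \ B_{m-k}| ≥ c·|B_{m+k} \ B_m|`. -/
theorem doubling_shell_comparison {G : Type*} [Group G] [DecidableEq G]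
    (V : Finset G) (hone : (1 : G) ∈ V) (hsymm : V⁻¹ = V)
    (hgen : ∀ g : G, ∃ n : ℕ, g ∈ V ^ n)
    (A : ℝ) (hdbl : ∀ n : ℕ, 1 ≤ n → ((V ^ (2 * n)).card : ℝ) ≤ A * (V ^ n).card) :
    ∃ c > (0 : ℝ), ∀ k m : ℕ, 1 ≤ k → k ≤ m →
      c * (((V ^ (m + k)) \ (V ^ m)).card : ℝ) ≤ (((V ^ m) \ (V ^ (m - k))).card : ℝ) := by
  classical
  have hV1 : 1 ≤ V.card := card_pos.2 ⟨1, hone⟩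
  have hcardpos : ∀ n : ℕ, 0 < ((V ^ n).card : ℝ) := by
    intro n
    exact_mod_cast card_pos.2 ⟨1, one_mem_pow hone⟩
  have hA1 : 1 ≤ A := by
    have h1 := hdbl 1 le_rfl
    have h2 : ((V ^ 1).card : ℝ) ≤ ((V ^ 2).card : ℝ) := by
      exact_mod_cast card_le_card (pow_subset_pow_right hone one_le_two)
    have h3 := hcardpos 1
    rw [show 2 * 1 = 2 from rfl] at h1
    nlinarith
  have hA0 : 0 ≤ A := by linarith
  -- doubling chain
  have hchain : ∀ r : ℕ, 1 ≤ r → ((V ^ (16 * r)).card : ℝ) ≤ A ^ 4 * (V ^ r).card := by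
    intro r hr
    have e16 : 16 * r = 2 * (8 * r) := by ring
    have e8 : 8 * r = 2 * (4 * r) := by ring
    have e4 : 4 * r = 2 * (2 * r) := by ring
    have h16 := hdbl (8 * r) (by omega)
    have h8 := hdbl (4 * r) (by omega)
    have h4 := hdbl (2 * r) (by omega)
    have h2 := hdbl r hr
    rw [← e16] at h16; rw [← e8] at h8; rw [← e4] at h4
    calc ((V ^ (16 * r)).card : ℝ) ≤ A * (V ^ (8 * r)).card := h16
      _ ≤ A * (A * (V ^ (4 * r)).card) := by
          exact mul_le_mul_of_nonneg_left h8 hA0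
      _ ≤ A * (A * (A * (V ^ (2 * r)).card)) := by
          refine mul_le_mul_of_nonneg_left (mul_le_mul_of_nonneg_left h4 hA0) hA0
      _ ≤ A * (A * (A * (A * (V ^ r).card))) := by
          refine mul_le_mul_of_nonneg_left
            (mul_le_mul_of_nonneg_left (mul_le_mul_of_nonneg_left h2 hA0) hA0) hA0
      _ = A ^ 4 * (V ^ r).card := by ring
  set M : ℝ := max (A ^ 4) ((V.card : ℝ) ^ 3) with hM
  have hMpos : 0 < M := lt_of_lt_of_le (by positivity) (le_max_left _ _)
  refine ⟨M⁻¹, inv_pos.2 hMpos, fun k m hk hkm => ?_⟩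
  have hMinv0 : (0 : ℝ) ≤ M⁻¹ := le_of_lt (inv_pos.2 hMpos)
  have hCin0 : (0 : ℝ) ≤ (((V ^ m) \ (V ^ (m - k))).card : ℝ) := by positivity
  by_cases h3 : 3 ≤ k
  · -- large k: net argument with r = k / 3
    set r := k / 3 with hr
    have hr1 : 1 ≤ r := by omega
    have hrk : 2 * r + 1 ≤ k := by omega
    have hmc := main_count hone hsymm hrk hkm
    have hmono : (V ^ (2 * k + r - 1)).card ≤ (V ^ (16 * r)).card :=
      card_le_card (pow_subset_pow_right hone (by omega))
    have key : (((V ^ (m + k)) \ (V ^ m)).card : ℝ) * (V ^ r).card ≤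
        (A ^ 4 * (((V ^ m) \ (V ^ (m - k))).card : ℝ)) * (V ^ r).card := by
      have h1 : (((V ^ (m + k)) \ (V ^ m)).card : ℝ) * (V ^ r).card ≤
          ((V ^ (16 * r)).card : ℝ) * (((V ^ m) \ (V ^ (m - k))).card : ℝ) := by
        exact_mod_cast le_trans hmc (Nat.mul_le_mul_right _ hmono)
      calc (((V ^ (m + k)) \ (V ^ m)).card : ℝ) * (V ^ r).card
          ≤ ((V ^ (16 * r)).card : ℝ) * (((V ^ m) \ (V ^ (m - k))).card : ℝ) := h1
        _ ≤ (A ^ 4 * (V ^ r).card) * (((V ^ m) \ (V ^ (m - k))).card : ℝ) :=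
            mul_le_mul_of_nonneg_right (hchain r hr1) hCin0
        _ = (A ^ 4 * (((V ^ m) \ (V ^ (m - k))).card : ℝ)) * (V ^ r).card := by ring
    have hout : (((V ^ (m + k)) \ (V ^ m)).card : ℝ) ≤
        A ^ 4 * (((V ^ m) \ (V ^ (m - k))).card : ℝ) :=
      le_of_mul_le_mul_right key (hcardpos r)
    calc M⁻¹ * (((V ^ (m + k)) \ (V ^ m)).card : ℝ)
        ≤ M⁻¹ * (A ^ 4 * (((V ^ m) \ (V ^ (m - k))).card : ℝ)) :=
          mul_le_mul_of_nonneg_left hout hMinv0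
      _ = (M⁻¹ * A ^ 4) * (((V ^ m) \ (V ^ (m - k))).card : ℝ) := by ring
      _ ≤ 1 * (((V ^ m) \ (V ^ (m - k))).card : ℝ) := by
          refine mul_le_mul_of_nonneg_right ?_ hCin0
          calc M⁻¹ * A ^ 4 ≤ M⁻¹ * M :=
                mul_le_mul_of_nonneg_left (le_max_left _ _) hMinv0
            _ = 1 := inv_mul_cancel₀ (ne_of_gt hMpos)
      _ = _ := one_mul _
  · -- small k (k = 1 or 2): r = 0
    have hrk : 2 * 0 + 1 ≤ k := by omega
    have hmc := main_count hone hsymm hrk hkm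
    rw [pow_zero, card_one, mul_one] at hmc
    have hmono : (V ^ (2 * k + 0 - 1)).card ≤ V.card ^ 3 :=
      le_trans card_pow_le (Nat.pow_le_pow_right hV1 (by omega))
    have hout : (((V ^ (m + k)) \ (V ^ m)).card : ℝ) ≤
        (V.card : ℝ) ^ 3 * (((V ^ m) \ (V ^ (m - k))).card : ℝ) := by
      exact_mod_cast le_trans hmc (Nat.mul_le_mul_right _ hmono)
    calc M⁻¹ * (((V ^ (m + k)) \ (V ^ m)).card : ℝ)
        ≤ M⁻¹ * ((V.card : ℝ) ^ 3 * (((V ^ m) \ (V ^ (m - k))).card : ℝ)) :=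
          mul_le_mul_of_nonneg_left hout hMinv0
      _ = (M⁻¹ * (V.card : ℝ) ^ 3) * (((V ^ m) \ (V ^ (m - k))).card : ℝ) := by ring
      _ ≤ 1 * (((V ^ m) \ (V ^ (m - k))).card : ℝ) := by
          refine mul_le_mul_of_nonneg_right ?_ hCin0
          calc M⁻¹ * (V.card : ℝ) ^ 3 ≤ M⁻¹ * M :=
                mul_le_mul_of_nonneg_left (le_max_right _ _) hMinv0
            _ = 1 := inv_mul_cancel₀ (ne_of_gt hMpos)
      _ = _ := one_mul _
end

section
/- (Haar measure on semidirect products) Let G = U ⋉ V be a semidirect product of lcsc groups with V closed and normal and U closed. Then the multiplication map ψ: U × V → G, ψ(u,v) = uv, is a homeomorphism pushing the product m_U × m_V of left Haar measures forward to a left Haar measure on G. -/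
open MeasureTheory

/-- Haar measure on semidirect products: for an lcsc group `G = U ⋉ V` with `V`
closed normal and `U` closed, the multiplication map `ψ(u,v) = uv` is a
homeomorphism from `U × V` onto `G`, and it pushes the product of left Haar
measures forward to a left Haar measure on `G`. -/
theorem haar_measure_semidirect_product {G : Type*} [Group G] [TopologicalSpace G]
    [IsTopologicalGroup G] [LocallyCompactSpace G] [SecondCountableTopology G]
    [MeasurableSpace G] [BorelSpace G]
    (U V : Subgroup G) [V.Normal]
    (hUclosed : IsClosed (U : Set G)) (hVclosed : IsClosed (V : Set G))
    (hUV : U ⊓ V = ⊥)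
    (hprod : ∀ g : G, ∃ u ∈ U, ∃ v ∈ V, g = u * v)
    (μU : Measure U) [μU.IsHaarMeasure]
    (μV : Measure V) [μV.IsHaarMeasure] :
    IsHomeomorph (fun p : U × V => (p.1 : G) * (p.2 : G)) ∧
      ((μU.prod μV).map (fun p : U × V => (p.1 : G) * (p.2 : G))).IsHaarMeasure := by
  have hN : V.Normal := inferInstance
  set ψ : U × V → G := fun p => (p.1 : G) * (p.2 : G) with hψdef
  -- `G` is Hausdorff since `{1} = U ∩ V` is closed
  have h1closed : IsClosed ({1} : Set G) := by
    have h : (U : Set G) ∩ (V : Set G) = {1} := by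
      rw [← Subgroup.coe_inf, hUV, Subgroup.coe_bot]
    rw [← h]; exact hUclosed.inter hVclosed
  haveI : T2Space G := IsTopologicalGroup.t2Space_iff_one_closed.2 h1closed
  haveI : LocallyCompactSpace U := hUclosed.locallyCompactSpace
  haveI : SecondCountableTopology U := Topology.IsEmbedding.subtypeVal.secondCountableTopology
  haveI : SecondCountableTopology V := Topology.IsEmbedding.subtypeVal.secondCountableTopology
  haveI : LocallyCompactSpace V := hVclosed.locallyCompactSpace
  haveI : SigmaCompactSpace U := sigmaCompactSpace_of_locallyCompact_secondCountable
  haveI : SigmaCompactSpace V := sigmaCompactSpace_of_locallyCompact_secondCountable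
  haveI : BorelSpace U := Subtype.borelSpace _
  haveI : BorelSpace V := Subtype.borelSpace _
  have hcont : Continuous ψ :=
    ((continuous_subtype_val.comp continuous_fst).mul
      (continuous_subtype_val.comp continuous_snd))
  have hinj : Function.Injective ψ := by
    rintro ⟨u₁, v₁⟩ ⟨u₂, v₂⟩ h
    have h' : (u₁ : G) * v₁ = (u₂ : G) * v₂ := h
    have heq : (u₂ : G)⁻¹ * (u₁ : G) = (v₂ : G) * (v₁ : G)⁻¹ := by
      have : (u₂ : G)⁻¹ * ((u₁ : G) * v₁) * (v₁ : G)⁻¹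
          = (u₂ : G)⁻¹ * ((u₂ : G) * v₂) * (v₁ : G)⁻¹ := by rw [h']
      simpa [mul_assoc] using this
    have hx : (u₂ : G)⁻¹ * u₁ = 1 := by
      have hU' : (u₂ : G)⁻¹ * u₁ ∈ U := mul_mem (inv_mem u₂.2) u₁.2
      have hV' : (u₂ : G)⁻¹ * u₁ ∈ V := heq ▸ mul_mem v₂.2 (inv_mem v₁.2)
      have : (u₂ : G)⁻¹ * u₁ ∈ U ⊓ V := ⟨hU', hV'⟩
      rw [hUV] at this
      simpa [Subgroup.mem_bot] using this
    have hu : (u₂ : G) = u₁ := inv_mul_eq_one.mp hx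
    have hv : (v₁ : G) = v₂ := by
      apply mul_left_cancel (a := (u₁ : G))
      rw [h', ← hu]
    exact Prod.ext (Subtype.ext hu.symm) (Subtype.ext hv)
  have hsurj : Function.Surjective ψ := fun g => by
    obtain ⟨u, hu, v, hv, rfl⟩ := hprod g
    exact ⟨(⟨u, hu⟩, ⟨v, hv⟩), rfl⟩
  -- openness via the open mapping theorem for the action of `U × V` on `G`
  letI : MulAction (U × V) G :=
    { smul := fun p g => (p.1 : G) * g * (p.2 : G)⁻¹
      one_smul := fun g => by
        show ((1 : U) : G) * g * ((1 : V) : G)⁻¹ = g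
        simp
      mul_smul := fun p q g => by
        show ((p.1 * q.1 : U) : G) * g * ((p.2 * q.2 : V) : G)⁻¹
            = (p.1 : G) * ((q.1 : G) * g * (q.2 : G)⁻¹) * (p.2 : G)⁻¹
        push_cast
        group }
  haveI : ContinuousSMul (U × V) G := by
    constructor
    exact ((continuous_subtype_val.comp (continuous_fst.comp continuous_fst)).mul
        continuous_snd).mul
      ((continuous_subtype_val.comp (continuous_snd.comp continuous_fst)).inv)
  haveI : MulAction.IsPretransitive (U × V) G := by
    constructor
    intro x y
    obtain ⟨u, hu, v, hv, hg⟩ := hprod (y * x⁻¹)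
    refine ⟨(⟨u, hu⟩, ⟨(x⁻¹ * v * x)⁻¹, inv_mem (by simpa using hN.conj_mem v hv x⁻¹)⟩), ?_⟩
    show (u : G) * x * ((x⁻¹ * v * x)⁻¹)⁻¹ = y
    rw [inv_inv]
    have : (u : G) * x * (x⁻¹ * v * x) = (u * v) * x := by group
    rw [this, ← hg]
    group
  have hopen0 : IsOpenMap (fun p : U × V => p • (1 : G)) := isOpenMap_smul_of_sigmaCompact 1
  have hswap : IsOpenMap (fun p : U × V => (p.1, p.2⁻¹)) :=
    ((Homeomorph.refl U).prodCongr (Homeomorph.inv V)).isOpenMap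
  have hopen : IsOpenMap ψ := by
    have hcomp : ψ = (fun p : U × V => p • (1 : G)) ∘ (fun p : U × V => (p.1, p.2⁻¹)) := by
      funext p
      show (p.1 : G) * p.2 = (p.1 : G) * 1 * ((p.2⁻¹ : V) : G)⁻¹
      simp
    rw [hcomp]
    exact hopen0.comp hswap
  have hhom : IsHomeomorph ψ := ⟨hcont, hopen, hinj, hsurj⟩
  refine ⟨hhom, ?_⟩
  have hψm : Measurable ψ := hcont.measurable
  haveI : SigmaFinite μU := inferInstance
  haveI : SigmaFinite μV := inferInstance
  have hfin : IsFiniteMeasureOnCompacts ((μU.prod μV).map ψ) := by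
    constructor
    intro K hK
    rw [Measure.map_apply hψm hK.measurableSet]
    have hKp : IsCompact (ψ ⁻¹' K) :=
      (hhom.homeomorph ψ).isCompact_preimage.mpr hK
    exact hKp.measure_lt_top
  have hinv : ((μU.prod μV).map ψ).IsMulLeftInvariant := by
    constructor
    intro g
    obtain ⟨u₁, hu₁, v₁, hv₁, rfl⟩ := hprod g
    set σ : U → V := fun u => ⟨(u : G)⁻¹ * v₁ * u, by simpa using hN.conj_mem v₁ hv₁ (u : G)⁻¹⟩
      with hσdef
    have hσcont : Continuous σ := by
      apply Continuous.subtype_mk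
      exact (continuous_subtype_val.inv.mul continuous_const).mul continuous_subtype_val
    set T : U × V → U × V := fun p => (⟨u₁, hu₁⟩ * p.1, σ p.1 * p.2) with hTdef
    have hT : MeasurePreserving T (μU.prod μV) (μU.prod μV) := by
      refine (measurePreserving_mul_left μU ⟨u₁, hu₁⟩).skew_product
        (g := fun u v => σ u * v) ?_ ?_
      · exact ((hσcont.comp continuous_fst).mul continuous_snd).measurable
      · exact Filter.Eventually.of_forall fun u => (measurePreserving_mul_left μV (σ u)).map_eq
    have hid : (fun x => (u₁ * v₁) * x) ∘ ψ = ψ ∘ T := by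
      funext p
      show (u₁ * v₁) * ((p.1 : G) * p.2)
          = ((⟨u₁, hu₁⟩ * p.1 : U) : G) * ((σ p.1 * p.2 : V) : G)
      push_cast [hσdef]
      group
    calc Measure.map (fun x => (u₁ * v₁) * x) ((μU.prod μV).map ψ)
        = (μU.prod μV).map ((fun x => (u₁ * v₁) * x) ∘ ψ) :=
          Measure.map_map (measurable_const_mul _) hψm
      _ = (μU.prod μV).map (ψ ∘ T) := by rw [hid]
      _ = ((μU.prod μV).map T).map ψ := (Measure.map_map hψm hT.measurable).symm
      _ = (μU.prod μV).map ψ := by rw [hT.map_eq]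
  have hpos : ((μU.prod μV).map ψ).IsOpenPosMeasure := by
    constructor
    intro s hs hne
    rw [Measure.map_apply hψm hs.measurableSet]
    exact (hs.preimage hcont).measure_ne_zero _ (hne.preimage hsurj)
  exact { toIsFiniteMeasureOnCompacts := hfin, toIsMulLeftInvariant := hinv,
          toIsOpenPosMeasure := hpos }
end
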